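/- Let $A$ be a nonempty finite set of real numbers and let $q > p \ge 1$ be real numbers (in particular, integers). Then $|p \cdot A + q \cdot A| \ge 3|A| - 2$. -/

import Mathlib

/-!
Induct on `A` by adding a new maximum `a` above the current maximum `m`. Every element of
`p • A + q • A` is at most `p m + q m`, while the enlarged sumset also contains
`p a + q m < p m + q a < p a + q a`, all above `p m + q m`; the middle inequality is
`(q - p)(a - m) > 0`. So each new element adds at least three sums, and a singleton gives one.
-/

open Pointwise Finset

theorem card_add_three_le_of_lt_of_lt {α : Type*} [LinearOrder α] {B C : Finset α} {x y z : α}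
    (hBC : B ⊆ C) (hx : x ∈ C) (hy : y ∈ C) (hz : z ∈ C) (hBx : ∀ b ∈ B, b < x)
    (hxy : x < y) (hyz : y < z) :
    #B + 3 ≤ #C := by
  have hx' : x ∉ B := fun h => (hBx x h).false
  have hy' : y ∉ insert x B := by
    simpa [hxy.ne'] using fun h => (hBx y h).not_gt hxy
  have hz' : z ∉ insert y (insert x B) := by
    simpa [hyz.ne', (hxy.trans hyz).ne'] using fun h => (hBx z h).not_gt (hxy.trans hyz)
  calc #B + 3 = #(insert z (insert y (insert x B))) := by
        rw [card_insert_of_notMem hz', card_insert_of_notMem hy', card_insert_of_notMem hx']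
    _ ≤ #C := card_le_card <| by simp [insert_subset_iff, *]

variable {K : Type*} [CommRing K] [LinearOrder K] [IsStrictOrderedRing K]

theorem le_of_mem_smul_add_smul {p q m y : K} (hp : 0 ≤ p) (hq : 0 ≤ q) {s : Finset K}
    (hs : ∀ x ∈ s, x ≤ m) (hy : y ∈ p • s + q • s) : y ≤ p * m + q * m := by
  obtain ⟨_, hpb, _, hqc, rfl⟩ := mem_add.mp hy
  obtain ⟨b, hb, rfl⟩ := mem_smul_finset.mp hpb
  obtain ⟨c, hc, rfl⟩ := mem_smul_finset.mp hqc
  simp only [smul_eq_mul]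
  gcongr
  exacts [hs b hb, hs c hc]

theorem card_smul_add_smul_insert_max {p q a : K} (hp : 0 < p) (hpq : p < q) {s : Finset K}
    (hs : s.Nonempty) (ha : ∀ x ∈ s, x < a) :
    #(p • s + q • s) + 3 ≤ #(p • insert a s + q • insert a s) := by
  set m := s.max' hs
  have hm : m ∈ s := s.max'_mem hs
  have hma : m < a := ha m hm
  have hq : 0 < q := hp.trans hpq
  have hmem {b c : K} (hb : b ∈ insert a s) (hc : c ∈ insert a s) :
      p * b + q * c ∈ p • insert a s + q • insert a s :=
    add_mem_add (smul_mem_smul_finset hb) (smul_mem_smul_finset hc)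
  have hsub : p • s + q • s ⊆ p • insert a s + q • insert a s := by
    gcongr <;> exact subset_insert a s
  have hbelow (y : K) (hy : y ∈ p • s + q • s) : y < p * a + q * m := by
    have := le_of_mem_smul_add_smul hp.le hq.le (m := m) (fun x hx => s.le_max' x hx) hy
    nlinarith
  have hmid : p * a + q * m < p * m + q * a := by nlinarith
  have htop : p * m + q * a < p * a + q * a := by nlinarith
  exact card_add_three_le_of_lt_of_lt hsub (hmem (mem_insert_self a s) (mem_insert_of_mem hm))
    (hmem (mem_insert_of_mem hm) (mem_insert_self a s))
    (hmem (mem_insert_self a s) (mem_insert_self a s)) hbelow hmid htop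

theorem three_mul_card_le_card_smul_add_smul {p q : K} (hp : 0 < p) (hpq : p < q) (A : Finset K) :
    3 * #A ≤ #(p • A + q • A) + 2 := by
  induction A using induction_on_max with
  | empty => simp
  | insert a s ha ih =>
    rcases s.eq_empty_or_nonempty with rfl | hs
    · simp [smul_finset_singleton, singleton_add_singleton]
    · have := card_smul_add_smul_insert_max hp hpq hs ha
      rw [card_insert_of_notMem fun h => (ha a h).false]
      omega

theorem card_dilates_ge_three_general (p q : ℝ) (hp : 1 ≤ p) (hpq : p < q)
    (A : Finset ℝ) :
    ((p • A + q • A).card : ℤ) ≥ 3 * A.card - 2 := by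
  have := three_mul_card_le_card_smul_add_smul (zero_lt_one.trans_le hp) hpq A
  omega

/-- For a nonempty finite set `A ⊆ ℝ` and real numbers `q > p ≥ 1`,
`|p ⬝ A + q ⬝ A| ≥ 3|A| - 2`. -/
theorem card_dilates_ge_three (p q : ℝ) (hp : 1 ≤ p) (hpq : p < q)
    (A : Finset ℝ) (hA : A.Nonempty) :
    ((p • A + q • A).card : ℤ) ≥ 3 * A.card - 2 :=
  card_dilates_ge_three_general p q hp hpq A
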